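/- arXiv:2001.11459 — 2 statements merged into one kernel-verified Lean document; each statement's English description precedes it below -/
import Mathlib

section
/- Let (X_{it}) be i.i.d. symmetric random variables. Let I ∈ {1,…,p}^k be an r-path of length k (i.e. I has exactly r distinct components, 1 ≤ r ≤ k). Then for any T ∈ {1,…,n}^k with f(I,T) > 0, the number of distinct components of T is at most k − r + 1. -/
/-!
If `f(I,T) > 0`, every index pair `(i,t)` occurs an even number of times among the `2k` factors
`Y_{i_j t_{j-1}}, Y_{i_j t_j}`: otherwise flipping the sign of `X_{it}`, which preserves the joint
law of the array (independence and symmetry) and every `D_i`, negates the integrand, so `f = 0`.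
Read as edges of the bipartite graph between the values of `I` and of `T`, the factors form a
closed walk of length `2k` through all `r + #T` vertices using each edge at least twice. Hence
there are at most `k` distinct edges, and the walk visits at most one vertex more than it has
edges: `r + #T ≤ k + 1`.
-/

open MeasureTheory ProbabilityTheory Filter

noncomputable section

variable {Ω : Type*}

/-- The self-normalized entries `Y_{it} = X_{it} / sqrt(D_i)` with `D_i = ∑_{t<n} X_{it}²`. -/
def Ymat (X : ℕ → ℕ → Ω → ℝ) (n i t : ℕ) (ω : Ω) : ℝ :=
  X i t ω / Real.sqrt (∑ s ∈ Finset.range n, (X i s ω) ^ 2)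

/-- `f(I,T) = E[∏_j Y_{i_j t_{j-1}} Y_{i_j t_j}]`, with the cyclic convention `t_0 = t_k`. -/
def fpath [MeasurableSpace Ω] (X : ℕ → ℕ → Ω → ℝ) (P : Measure Ω) (n : ℕ) {k : ℕ}
    (I T : Fin k → ℕ) : ℝ :=
  ∫ ω, ∏ j : Fin k, (Ymat X n (I j) (T ((finRotate k).symm j)) ω * Ymat X n (I j) (T j) ω) ∂P

open Finset

theorem card_image_le_card_image_sym2_add_one {V : Type*} [DecidableEq V] (v : ℕ → V) (M : ℕ) :
    #((range (M + 1)).image v) ≤ #((range M).image fun a => s(v a, v (a + 1))) + 1 := by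
  induction M with
  | zero => simp
  | succ M ih =>
    have hvert : (range (M + 2)).image v = insert (v (M + 1)) ((range (M + 1)).image v) := by
      rw [range_add_one, image_insert]
    have hedge : ((range (M + 1)).image fun a => s(v a, v (a + 1))) =
        insert s(v M, v (M + 1)) ((range M).image fun a => s(v a, v (a + 1))) := by
      rw [range_add_one, image_insert]
    rw [hvert, hedge]
    by_cases hold : v (M + 1) ∈ (range (M + 1)).image v
    · rw [insert_eq_of_mem hold]
      exact ih.trans (by gcongr; exact subset_insert _ _)
    · have hnew : s(v M, v (M + 1)) ∉ (range M).image fun a => s(v a, v (a + 1)) := by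
        simp only [mem_image, mem_range, not_exists, not_and] at hold ⊢
        intro a ha hedge
        rcases Sym2.eq_iff.1 hedge with ⟨-, h⟩ | ⟨h, -⟩
        · exact hold (a + 1) (by omega) h
        · exact hold a (by omega) h
      rw [card_insert_of_notMem hold, card_insert_of_notMem hnew]
      omega

theorem two_mul_card_image_le_card_of_even {α β : Type*} [DecidableEq β] (f : α → β)
    (s : Finset α) (heven : ∀ b, Even #{a ∈ s | f a = b}) : 2 * #(s.image f) ≤ #s := by
  refine mul_card_image_le_card s 2 fun b hb => ?_
  obtain ⟨a, ha, rfl⟩ := mem_image.1 hb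
  have hpos : 0 < #{x ∈ s | f x = f a} := card_pos.2 ⟨a, mem_filter.2 ⟨ha, rfl⟩⟩
  obtain ⟨c, hc⟩ := heven (f a)
  omega

def pathEntry {α β : Type*} {k : ℕ} (I : Fin k → α) (T : Fin k → β) : Fin k ⊕ Fin k → α × β :=
  Sum.elim (fun j => (I j, T ((finRotate k).symm j))) (fun j => (I j, T j))

open Fin.NatCast in
theorem card_image_add_card_image_le_card_image_pathEntry {α β : Type*} [DecidableEq α]
    [DecidableEq β] {k : ℕ} (I : Fin k → α) (T : Fin k → β) :
    #(univ.image I) + #(univ.image T) ≤ #(univ.image (pathEntry I T)) + 1 := by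
  rcases k with _ | k
  · simp
  -- the closed walk `I 0, T 0, I 1, T 1, …, I k, T k, I 0` in the bipartite graph on `α ⊕ β`
  let v : ℕ → α ⊕ β := fun a => if a % 2 = 0 then .inl (I (a / 2 : ℕ)) else .inr (T (a / 2 : ℕ))
  have hv_even (m : ℕ) : v (2 * m) = .inl (I m) := by simp [v]
  have hv_odd (m : ℕ) : v (2 * m + 1) = .inr (T m) := by
    simp [v, Nat.add_mod, show (2 * m + 1) / 2 = m by omega]
  have hvert : (univ.image I).disjSum (univ.image T) ⊆ (range (2 * (k + 1) + 1)).image v := by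
    rintro (a | b) h
    · obtain ⟨j, -, rfl⟩ := mem_image.1 (inl_mem_disjSum.1 h)
      exact mem_image.2 ⟨2 * j, by simp, by simp [hv_even]⟩
    · obtain ⟨j, -, rfl⟩ := mem_image.1 (inr_mem_disjSum.1 h)
      exact mem_image.2 ⟨2 * j + 1, by simp; omega, by simp [hv_odd]⟩
  have hedge : ((range (2 * (k + 1))).image fun a => s(v a, v (a + 1))) ⊆
      (univ.image (pathEntry I T)).image fun e => s(.inl e.1, .inr e.2) := by
    intro x hx
    obtain ⟨a, -, rfl⟩ := mem_image.1 hx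
    obtain ⟨m, rfl | rfl⟩ := Nat.even_or_odd' a
    · refine mem_image.2 ⟨_, mem_image_of_mem _ (mem_univ (.inr (m : Fin (k + 1)))), ?_⟩
      simp [pathEntry, hv_even, hv_odd]
    · refine mem_image.2 ⟨_, mem_image_of_mem _ (mem_univ (.inl (m + 1 : Fin (k + 1)))), ?_⟩
      rw [show 2 * m + 1 + 1 = 2 * (m + 1) by ring, hv_odd, hv_even, Sym2.eq_swap]
      simp [pathEntry]
  calc #(univ.image I) + #(univ.image T) = #((univ.image I).disjSum (univ.image T)) :=
        (card_disjSum _ _).symm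
    _ ≤ #((range (2 * (k + 1) + 1)).image v) := card_le_card hvert
    _ ≤ #((range (2 * (k + 1))).image fun a => s(v a, v (a + 1))) + 1 :=
        card_image_le_card_image_sym2_add_one v _
    _ ≤ #(univ.image (pathEntry I T)) + 1 := by
        gcongr
        exact (card_le_card hedge).trans card_image_le

section SignFlip

variable {ι : Type*} [DecidableEq ι]

def negAt (i₀ : ι) (x : ι → ℝ) : ι → ℝ := fun i => if i = i₀ then -x i else x i

theorem negAt_involutive (i₀ : ι) : Function.Involutive (negAt i₀) := by
  intro x; funext i; unfold negAt; split_ifs <;> simp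

theorem measurable_negAt (i₀ : ι) : Measurable (negAt i₀) :=
  measurable_pi_lambda _ fun i => by
    unfold negAt; split_ifs
    exacts [(measurable_pi_apply i).neg, measurable_pi_apply i]

theorem map_negAt_map_eq [MeasurableSpace Ω] {P : Measure Ω} [IsProbabilityMeasure P]
    {Z : ι → Ω → ℝ} (hZ : ∀ i, Measurable (Z i)) (hindep : iIndepFun Z P) {i₀ : ι}
    (hsymm : IdentDistrib (Z i₀) (fun ω => -Z i₀ ω) P P) :
    (P.map fun ω i => Z i ω).map (negAt i₀) = P.map fun ω i => Z i ω := by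
  have : ∀ i, IsProbabilityMeasure (P.map (Z i)) :=
    fun i => Measure.isProbabilityMeasure_map (hZ i).aemeasurable
  rw [hindep.map_fun_eq_infinitePi_map hZ]
  refine (Measure.infinitePi_map_pi _ (f := fun i x => if i = i₀ then -x else x)
    fun i => ?_).trans ?_
  · split_ifs
    exacts [measurable_neg, measurable_id]
  · congr 1
    funext i
    split_ifs with h
    · subst h
      exact (Measure.map_map measurable_neg (hZ i)).trans hsymm.map_eq.symm
    · exact Measure.map_id

end SignFlip

theorem integral_eq_zero_of_map_eq_of_comp_eq_neg {α : Type*} [MeasurableSpace α] {μ : Measure α}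
    {σ : α → α} (hσ : Measurable σ) (hinv : Function.Involutive σ) (hμ : μ.map σ = μ)
    {g : α → ℝ} (hg : ∀ x, g (σ x) = -g x) : ∫ x, g x ∂μ = 0 := by
  have h := MeasurePreserving.integral_comp' (f := MeasurableEquiv.ofInvolutive σ hinv hσ)
    ⟨hσ, hμ⟩ g
  simp only [MeasurableEquiv.ofInvolutive_apply, hg, integral_neg] at h
  linarith

def entry (i t : ℕ) (M : ℕ × ℕ → ℝ) : ℝ := M (i, t)

theorem prod_Ymat_eq_prod_pathEntry (X : ℕ → ℕ → Ω → ℝ) (n : ℕ) {k : ℕ} (I T : Fin k → ℕ)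
    (ω : Ω) :
    ∏ j : Fin k, (Ymat X n (I j) (T ((finRotate k).symm j)) ω * Ymat X n (I j) (T j) ω) =
      ∏ o, Ymat X n (pathEntry I T o).1 (pathEntry I T o).2 ω := by
  rw [Fintype.prod_sum_type, ← prod_mul_distrib]
  rfl

theorem measurable_Ymat [MeasurableSpace Ω] {X : ℕ → ℕ → Ω → ℝ}
    (hX : ∀ i t, Measurable (X i t)) (n i t : ℕ) : Measurable (Ymat X n i t) := by
  unfold Ymat
  fun_prop

theorem fpath_eq_fpath_entry_map [MeasurableSpace Ω] {X : ℕ → ℕ → Ω → ℝ}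
    (hX : ∀ i t, Measurable (X i t)) (P : Measure Ω) (n : ℕ) {k : ℕ} (I T : Fin k → ℕ) :
    fpath X P n I T = fpath entry (P.map fun ω q => X q.1 q.2 ω) n I T := by
  have hentry : ∀ i t, Measurable (entry i t) := fun i t => measurable_pi_apply _
  exact (integral_map (measurable_pi_lambda _ fun q => hX q.1 q.2).aemeasurable
    (Finset.measurable_prod _ fun j _ =>
      (measurable_Ymat hentry ..).mul (measurable_Ymat hentry ..)).aestronglyMeasurable).symm

theorem Ymat_entry_negAt (n i t : ℕ) (p₀ : ℕ × ℕ) (M : ℕ × ℕ → ℝ) :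
    Ymat entry n i t (negAt p₀ M) = (if (i, t) = p₀ then -1 else 1) * Ymat entry n i t M := by
  have hden : ∑ s ∈ range n, entry i s (negAt p₀ M) ^ 2 = ∑ s ∈ range n, entry i s M ^ 2 :=
    sum_congr rfl fun s _ => by unfold entry negAt; split_ifs <;> ring
  simp only [Ymat, hden]
  unfold entry negAt
  split_ifs <;> ring

theorem fpath_entry_eq_zero_of_odd (μ : Measure (ℕ × ℕ → ℝ)) (n : ℕ) {k : ℕ} (I T : Fin k → ℕ)
    {p₀ : ℕ × ℕ} (hμ : μ.map (negAt p₀) = μ) (hodd : Odd #{o | pathEntry I T o = p₀}) :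
    fpath entry μ n I T = 0 := by
  unfold fpath
  simp only [prod_Ymat_eq_prod_pathEntry]
  refine integral_eq_zero_of_map_eq_of_comp_eq_neg (measurable_negAt p₀) (negAt_involutive p₀)
    hμ fun M => ?_
  simp only [Ymat_entry_negAt, Prod.mk.eta, prod_mul_distrib, prod_ite, prod_const, one_pow,
    mul_one, hodd.neg_one_pow, neg_one_mul]

theorem fpath_eq_zero_of_odd [MeasurableSpace Ω] {P : Measure Ω} [IsProbabilityMeasure P]
    {X : ℕ → ℕ → Ω → ℝ} (hX : ∀ i t, Measurable (X i t))
    (hindep : iIndepFun (fun q : ℕ × ℕ => X q.1 q.2) P) {p₀ : ℕ × ℕ}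
    (hsymm : IdentDistrib (X p₀.1 p₀.2) (fun ω => -X p₀.1 p₀.2 ω) P P)
    (n : ℕ) {k : ℕ} (I T : Fin k → ℕ) (hodd : Odd #{o | pathEntry I T o = p₀}) :
    fpath X P n I T = 0 := by
  rw [fpath_eq_fpath_entry_map hX]
  exact fpath_entry_eq_zero_of_odd _ n I T
    (map_negAt_map_eq (fun q : ℕ × ℕ => hX q.1 q.2) hindep hsymm) hodd

theorem card_image_T_le_of_fpath_pos_general
    [MeasurableSpace Ω] (P : Measure Ω) [IsProbabilityMeasure P]
    (X : ℕ → ℕ → Ω → ℝ)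
    (hmeas : ∀ i t, Measurable (X i t))
    (hindep : iIndepFun
      (fun it : ℕ × ℕ => X it.1 it.2) P)
    (hident : ∀ i t, IdentDistrib (X i t) (X 0 0) P P)
    (hsymm : IdentDistrib (X 0 0) (fun ω => -X 0 0 ω) P P)
    (n k r : ℕ)
    (I : Fin k → ℕ)
    (hI : (Finset.univ.image I).card = r)
    (T : Fin k → ℕ)
    (hpos : 0 < fpath X P n I T) :
    (Finset.univ.image T).card ≤ k - r + 1 := by
  have hsymmAt (q : ℕ × ℕ) : IdentDistrib (X q.1 q.2) (fun ω => -X q.1 q.2 ω) P P :=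
    (hident q.1 q.2).trans (hsymm.trans ((hident q.1 q.2).symm.comp measurable_neg))
  have heven (q : ℕ × ℕ) : Even #{o | pathEntry I T o = q} := by
    by_contra hodd
    exact hpos.ne' <|
      fpath_eq_zero_of_odd hmeas hindep (hsymmAt q) n I T (Nat.not_even_iff_odd.1 hodd)
  have hvert := card_image_add_card_image_le_card_image_pathEntry I T
  have hedge := two_mul_card_image_le_card_of_even (pathEntry I T) univ heven
  simp only [card_univ, Fintype.card_sum, Fintype.card_fin] at hedge
  omega

theorem card_image_T_le_of_fpath_pos
    [MeasurableSpace Ω] (P : Measure Ω) [IsProbabilityMeasure P]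
    (X : ℕ → ℕ → Ω → ℝ)
    (hmeas : ∀ i t, Measurable (X i t))
    (hindep : iIndepFun
      (fun it : ℕ × ℕ => X it.1 it.2) P)
    (hident : ∀ i t, IdentDistrib (X i t) (X 0 0) P P)
    (hnondeg : ¬ ∃ c : ℝ, ∀ᵐ ω ∂P, X 0 0 ω = c)
    (hsymm : IdentDistrib (X 0 0) (fun ω => -X 0 0 ω) P P)
    (n p k r : ℕ) (hk : 1 ≤ k) (hr1 : 1 ≤ r) (hrk : r ≤ k)
    (I : Fin k → ℕ) (hIp : ∀ l, I l < p)
    (hI : (Finset.univ.image I).card = r)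
    (T : Fin k → ℕ) (hT : ∀ l, T l < n)
    (hpos : 0 < fpath X P n I T) :
    (Finset.univ.image T).card ≤ k - r + 1 :=
  card_image_T_le_of_fpath_pos_general P X hmeas hindep hident hsymm n k r I hI T hpos

end
end

section
/- For every positive integer k and every x ∈ [0,1], the function f_k(x) = 1 + ∑_{i=1}^{2k} binom(2k, i) · (−1/(1+x))^i · ∑_{r=1}^{i} (1/r)·binom(i, r−1)·binom(i−1, r−1)·x^{r−1} satisfies f_k(x) = 1 − ∑_{j=1}^{k} (x^{j−1}/(1+x)^{2j−1}) · (2j−2)! / (j!(j−1)!), and moreover f_k(x) ≤ (4x)^k / (1+x)^{2k−1}. -/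
/-!
Write `y = 1 + x`. Coker's identity expresses the Narayana polynomial `N_{m+1}(x)` as
`∑ⱼ Cⱼ binom(m, 2j) xʲ y^(m-2j)`, with `Cⱼ` the Catalan numbers. Substituting it into `f_k`
and exchanging the sums leaves the alternating sums `∑ₘ (-1)^(m+1) binom(2k, m+1) binom(m, 2j)`,
which equal `-1` for `j < k` and vanish otherwise; this gives the closed form
`f_k(x) = 1 - ∑_{j<k} Cⱼ xʲ / y^(2j+1)`.

For the bound put `u = x / y²`. Since `1 + u y² = y`, the recursion `C_{n+1} = ∑ Cᵢ C_{n-i}`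
keeps the partial sums of `∑ Cⱼ uʲ` below `y`; so the series converges, and its sum is a root of
`L = 1 + u L²` that is at most `y`, hence equal to `y` when `x ≤ 1`. Then `y f_k(x)` is the tail
`∑_{j ≥ k} Cⱼ uʲ`, and `C_{j+k} ≤ 4ᵏ Cⱼ` bounds it by `(4u)ᵏ y`.
-/

noncomputable section

/-- The function `f_k(x)` from Heiny–Mikosch (A.2). -/
def fkfun (k : ℕ) (x : ℝ) : ℝ :=
  1 + ∑ i ∈ Finset.Icc 1 (2 * k), (Nat.choose (2 * k) i : ℝ) * (-1 / (1 + x)) ^ i *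
      ∑ r ∈ Finset.Icc 1 i, (1 / (r : ℝ)) * (Nat.choose i (r - 1)) *
        (Nat.choose (i - 1) (r - 1)) * x ^ (r - 1)

open Finset

lemma Finset.sum_Icc_one_eq_sum_range {M : Type*} [AddCommMonoid M] (f : ℕ → M) (n : ℕ) :
    ∑ i ∈ Icc 1 n, f i = ∑ m ∈ range n, f (m + 1) := by
  rw [range_eq_Ico, ← Ico_add_one_right_eq_Icc, sum_Ico_add']

theorem one_add_pow_eq_sum_range {R : Type*} [CommSemiring R] (x : R) {n N : ℕ} (hN : n < N) :
    (1 + x) ^ n = ∑ t ∈ range N, (n.choose t : R) * x ^ t := by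
  rw [add_comm, add_pow, eventually_constant_sum (N := n + 1) (fun t ht => by
    rw [Nat.choose_eq_zero_of_lt ht, Nat.cast_zero, zero_mul]) hN]
  simp only [one_pow, mul_one, mul_comm]

namespace Nat

theorem choose_mul_choose_sub_comm (n a b : ℕ) :
    n.choose a * (n - a).choose b = n.choose b * (n - b).choose a := by
  have ha := choose_mul (n := n) (Nat.le_add_right a b)
  have hb := choose_mul (n := n) (Nat.le_add_left b a)
  rw [add_tsub_cancel_left] at ha
  rw [add_tsub_cancel_right] at hb
  rw [← ha, ← hb, choose_symm_add]

theorem choose_two_mul_mul_centralBinom_mul_choose {m s j : ℕ} (hjs : j ≤ s) :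
    m.choose (2 * j) * j.centralBinom * (m - 2 * j).choose (s - j) =
      m.choose s * (s.choose j * (m - s).choose j) := by
  have h₁ := choose_mul (n := m) (show j ≤ 2 * j by omega)
  have h₂ := choose_mul (n := m) hjs
  have h₃ := choose_mul_choose_sub_comm (m - j) j (s - j)
  rw [show 2 * j - j = j by omega] at h₁
  rw [show m - j - j = m - 2 * j by omega, show m - j - (s - j) = m - s by omega] at h₃
  rw [centralBinom_eq_two_mul_choose, h₁, ← mul_assoc, h₂, mul_assoc, mul_assoc, h₃]

theorem sum_range_choose_mul_choose_succ (s n : ℕ) :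
    ∑ j ∈ range (s + 1), s.choose j * n.choose (j + 1) = (s + n).choose (s + 1) := by
  rw [add_comm s n, add_choose_eq, Finset.Nat.sum_antidiagonal_eq_sum_range_succ
    (fun a b => n.choose a * s.choose b), Nat.succ_eq_add_one,
    sum_range_succ' (fun k => n.choose k * s.choose (s + 1 - k)), Nat.sub_zero, choose_succ_self,
    mul_zero, add_zero]
  refine sum_congr rfl fun j hj => ?_
  rw [mul_comm, Nat.add_sub_add_right, choose_symm (Nat.lt_succ_iff.mp (mem_range.mp hj))]

theorem succ_sub_mul_catalan_mul_choose_mul_choose {m s j : ℕ} (hjs : j ≤ s) (hsm : s ≤ m) :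
    (m + 1 - s) * (catalan j * m.choose (2 * j) * (m - 2 * j).choose (s - j)) =
      m.choose s * (s.choose j * (m + 1 - s).choose (j + 1)) := by
  refine Nat.eq_of_mul_eq_mul_left j.succ_pos ?_
  have hcat : (j + 1) * catalan j = j.centralBinom := succ_mul_catalan_eq_centralBinom j
  have habs := add_one_mul_choose_eq (m - s) j
  rw [show m - s + 1 = m + 1 - s by omega] at habs
  calc (j + 1) * ((m + 1 - s) * (catalan j * m.choose (2 * j) * (m - 2 * j).choose (s - j)))
      = (m + 1 - s) * (m.choose (2 * j) * ((j + 1) * catalan j) * (m - 2 * j).choose (s - j)) := by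
        ring
    _ = m.choose s * s.choose j * ((m + 1 - s) * (m - s).choose j) := by
        rw [hcat, choose_two_mul_mul_centralBinom_mul_choose hjs]; ring
    _ = (j + 1) * (m.choose s * (s.choose j * (m + 1 - s).choose (j + 1))) := by
        rw [habs]; ring

theorem succ_mul_sum_catalan_mul_choose_mul_choose {m s : ℕ} (hsm : s ≤ m) :
    (s + 1) * ∑ j ∈ range (s + 1), catalan j * m.choose (2 * j) * (m - 2 * j).choose (s - j) =
      (m + 1).choose s * m.choose s := by
  refine Nat.eq_of_mul_eq_mul_left (show 0 < m + 1 - s by omega) ?_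
  have hsum : (m + 1 - s) * ∑ j ∈ range (s + 1),
      catalan j * m.choose (2 * j) * (m - 2 * j).choose (s - j) =
        m.choose s * (m + 1).choose (s + 1) := by
    rw [mul_sum, sum_congr rfl fun j hj =>
      succ_sub_mul_catalan_mul_choose_mul_choose (Nat.lt_succ_iff.mp (mem_range.mp hj)) hsm,
      ← mul_sum, sum_range_choose_mul_choose_succ, show s + (m + 1 - s) = m + 1 by omega]
  have habs := choose_succ_right_eq (m + 1) s
  calc (m + 1 - s) * ((s + 1) * ∑ j ∈ range (s + 1),
        catalan j * m.choose (2 * j) * (m - 2 * j).choose (s - j))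
      = m.choose s * ((m + 1).choose (s + 1) * (s + 1)) := by rw [mul_left_comm, hsum]; ring
    _ = (m + 1 - s) * ((m + 1).choose s * m.choose s) := by rw [habs]; ring

end Nat

theorem Int.alternating_sum_range_choose_mul_choose (n p : ℕ) :
    ∑ m ∈ Finset.range (n + 1), (-1 : ℤ) ^ m * n.choose m * m.choose p =
      if n = p then (-1) ^ p else 0 := by
  rcases lt_or_ge n p with hnp | hpn
  · rw [if_neg hnp.ne, sum_eq_zero fun m hm => by
      rw [Nat.choose_eq_zero_of_lt (n := m) (k := p) (by grind), Nat.cast_zero, mul_zero]]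
  obtain ⟨d, rfl⟩ := Nat.exists_eq_add_of_le hpn
  have hterm : ∀ t ∈ Finset.range (d + 1),
      (-1 : ℤ) ^ (p + t) * (p + d).choose (p + t) * (p + t).choose p =
        (-1) ^ p * (p + d).choose p * ((-1) ^ t * d.choose t) := by
    intro t _
    have h := Nat.choose_mul (n := p + d) (Nat.le_add_right p t)
    rw [Nat.add_sub_cancel_left, Nat.add_sub_cancel_left] at h
    rw [mul_assoc, ← Nat.cast_mul, h, pow_add]
    push_cast
    ring
  rw [add_assoc, sum_range_add, sum_eq_zero fun m hm => by
      rw [Nat.choose_eq_zero_of_lt (Finset.mem_range.mp hm), Nat.cast_zero, mul_zero],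
    zero_add, sum_congr rfl hterm, ← mul_sum, Int.alternating_sum_range_choose]
  rcases eq_or_ne d 0 with rfl | hd
  · simp
  · simp [hd]

theorem Int.alternating_sum_range_choose_succ_mul_choose (n p : ℕ) :
    ∑ m ∈ Finset.range n, (-1 : ℤ) ^ (m + 1) * n.choose (m + 1) * m.choose p =
      if p < n then (-1) ^ (p + 1) else 0 := by
  induction n with
  | zero => simp
  | succ n ih =>
    have hpascal : ∑ m ∈ Finset.range (n + 1),
        (-1 : ℤ) ^ (m + 1) * (n + 1).choose (m + 1) * m.choose p =
          -∑ m ∈ Finset.range (n + 1), (-1 : ℤ) ^ m * n.choose m * m.choose p +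
            ∑ m ∈ Finset.range (n + 1), (-1 : ℤ) ^ (m + 1) * n.choose (m + 1) * m.choose p := by
      rw [← sum_neg_distrib, ← sum_add_distrib]
      refine sum_congr rfl fun m _ => ?_
      rw [Nat.choose_succ_succ']
      push_cast
      ring
    rw [hpascal, sum_range_succ (fun m => (-1 : ℤ) ^ (m + 1) * n.choose (m + 1) * m.choose p) n,
      Nat.choose_succ_self, Nat.cast_zero, mul_zero, zero_mul, add_zero, ih,
      Int.alternating_sum_range_choose_mul_choose]
    split_ifs <;> omega

theorem catalan_mul_factorial_mul_factorial (n : ℕ) :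
    catalan n * ((n + 1).factorial * n.factorial) = (2 * n).factorial := by
  rw [← Nat.choose_mul_factorial_mul_factorial (show n ≤ 2 * n by omega),
    show 2 * n - n = n by omega, ← Nat.centralBinom_eq_two_mul_choose,
    ← succ_mul_catalan_eq_centralBinom, Nat.factorial_succ]
  ring

theorem catalan_succ_le_four_mul (n : ℕ) : catalan (n + 1) ≤ 4 * catalan n := by
  have h := Nat.succ_mul_centralBinom_succ n
  rw [← succ_mul_catalan_eq_centralBinom, ← succ_mul_catalan_eq_centralBinom] at h
  refine Nat.le_of_mul_le_mul_left (c := (n + 1) * (n + 2)) ?_ (by positivity)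
  calc (n + 1) * (n + 2) * catalan (n + 1) = 2 * (2 * n + 1) * ((n + 1) * catalan n) := by
        rw [← h]; ring
    _ ≤ (n + 1) * (n + 2) * (4 * catalan n) := by nlinarith [Nat.zero_le (catalan n)]

theorem catalan_add_le_four_pow_mul (j k : ℕ) : catalan (j + k) ≤ 4 ^ k * catalan j := by
  induction k with
  | zero => simp
  | succ k ih =>
    calc catalan (j + k + 1) ≤ 4 * catalan (j + k) := catalan_succ_le_four_mul _
      _ ≤ 4 * (4 ^ k * catalan j) := Nat.mul_le_mul_left 4 ih
      _ = 4 ^ (k + 1) * catalan j := by ring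

section Field

variable {K : Type*} [Field K] [CharZero K]

theorem catalan_eq_factorial_div (n : ℕ) :
    (catalan n : K) = (2 * n).factorial / ((n + 1).factorial * n.factorial) := by
  rw [eq_div_iff (by simp [Nat.factorial_ne_zero])]
  exact_mod_cast catalan_mul_factorial_mul_factorial n

theorem sum_range_catalan_mul_choose_mul_choose_eq (m : ℕ) {s : ℕ} (hsm : s ≤ m) :
    ∑ j ∈ range (s + 1), (catalan j * m.choose (2 * j) * (m - 2 * j).choose (s - j) : K) =
      (m + 1).choose s * m.choose s / (s + 1) := by
  rw [eq_div_iff (Nat.cast_add_one_ne_zero s), mul_comm]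
  exact_mod_cast Nat.succ_mul_sum_catalan_mul_choose_mul_choose hsm

/-- Coker's identity for the Narayana polynomials. -/
theorem sum_narayana_eq_sum_catalan (m : ℕ) (x : K) :
    ∑ r ∈ Icc 1 (m + 1), 1 / (r : K) * (m + 1).choose (r - 1) * m.choose (r - 1) * x ^ (r - 1) =
      ∑ j ∈ range (m + 1), catalan j * m.choose (2 * j) * x ^ j * (1 + x) ^ (m - 2 * j) := by
  have hexpand : ∀ j ∈ range (m + 1),
      (catalan j * m.choose (2 * j) * x ^ j * (1 + x) ^ (m - 2 * j) : K) =
        ∑ t ∈ range (m + 1 - j),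
          catalan j * m.choose (2 * j) * (m - 2 * j).choose t * x ^ (j + t) := by
    intro j hj
    rw [one_add_pow_eq_sum_range x (N := m + 1 - j) (by grind), mul_sum]
    exact sum_congr rfl fun t _ => by ring
  rw [sum_congr rfl hexpand, ← sum_range_diag_flip, sum_Icc_one_eq_sum_range]
  refine sum_congr rfl fun s hs => ?_
  rw [sum_congr rfl fun j hj => by
      rw [Nat.add_sub_cancel' (Nat.lt_succ_iff.mp (mem_range.mp hj))],
    ← sum_mul, sum_range_catalan_mul_choose_mul_choose_eq m (Nat.lt_succ_iff.mp (mem_range.mp hs))]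
  simp only [Nat.add_sub_cancel]
  push_cast
  ring

theorem choose_mul_neg_one_div_pow_mul_sum_catalan_eq (k : ℕ) {m : ℕ} (hm : m < 2 * k) {x : K}
    (hx : 1 + x ≠ 0) :
    ((2 * k).choose (m + 1) : K) * (-1 / (1 + x)) ^ (m + 1) *
      ∑ j ∈ range (m + 1), catalan j * m.choose (2 * j) * x ^ j * (1 + x) ^ (m - 2 * j) =
        ∑ j ∈ range k, catalan j * x ^ j / (1 + x) ^ (2 * j + 1) *
          ((-1) ^ (m + 1) * (2 * k).choose (m + 1) * m.choose (2 * j)) := by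
  have hterm : ∀ j, ((2 * k).choose (m + 1) : K) * (-1 / (1 + x)) ^ (m + 1) *
      (catalan j * m.choose (2 * j) * x ^ j * (1 + x) ^ (m - 2 * j)) =
        catalan j * x ^ j / (1 + x) ^ (2 * j + 1) *
          ((-1) ^ (m + 1) * (2 * k).choose (m + 1) * m.choose (2 * j)) := by
    intro j
    rcases le_or_gt (2 * j) m with hjm | hjm
    · obtain ⟨d, rfl⟩ := Nat.exists_eq_add_of_le hjm
      rw [Nat.add_sub_cancel_left, div_pow, show 2 * j + d + 1 = 2 * j + 1 + d by ring, pow_add]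
      field_simp
      ring
    · rw [Nat.choose_eq_zero_of_lt hjm]
      simp
  have hvanish : ∀ j ≥ m / 2 + 1, (catalan j * x ^ j / (1 + x) ^ (2 * j + 1) *
      ((-1) ^ (m + 1) * (2 * k).choose (m + 1) * m.choose (2 * j)) : K) = 0 := fun j hj => by
    rw [Nat.choose_eq_zero_of_lt (n := m) (k := 2 * j) (by omega), Nat.cast_zero, mul_zero,
      mul_zero]
  rw [mul_sum, sum_congr rfl fun j _ => hterm j, eventually_constant_sum hvanish (by omega),
    ← eventually_constant_sum hvanish (n := k) (by omega)]

end Field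

theorem fkfun_eq_one_sub_sum_catalan (k : ℕ) {x : ℝ} (hx : 1 + x ≠ 0) :
    fkfun k x = 1 - ∑ j ∈ range k, (catalan j : ℝ) * x ^ j / (1 + x) ^ (2 * j + 1) := by
  have halt : ∀ j ∈ range k, ∑ m ∈ range (2 * k),
      ((-1) ^ (m + 1) * (2 * k).choose (m + 1) * m.choose (2 * j) : ℝ) = -1 := by
    intro j hj
    have h : ∑ m ∈ range (2 * k),
        (-1 : ℤ) ^ (m + 1) * (2 * k).choose (m + 1) * m.choose (2 * j) = -1 := by
      rw [Int.alternating_sum_range_choose_succ_mul_choose, if_pos (by grind), pow_succ, pow_mul]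
      norm_num
    exact_mod_cast h
  rw [fkfun, sum_Icc_one_eq_sum_range]
  simp only [Nat.add_sub_cancel, sum_narayana_eq_sum_catalan]
  rw [sum_congr rfl fun m hm =>
      choose_mul_neg_one_div_pow_mul_sum_catalan_eq k (mem_range.mp hm) hx,
    sum_comm, sum_congr rfl fun j hj => by rw [← mul_sum, halt j hj],
    sub_eq_add_neg, ← sum_neg_distrib]
  simp only [mul_neg_one]

section CatalanSeries

variable {u c : ℝ}

theorem sum_range_succ_catalan_mul_pow_le (hu : 0 ≤ u) (n : ℕ) :
    ∑ j ∈ range (n + 1), (catalan j : ℝ) * u ^ j ≤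
      1 + u * (∑ j ∈ range n, (catalan j : ℝ) * u ^ j) ^ 2 := by
  set g : ℕ → ℝ := fun j => catalan j * u ^ j
  have hsucc : ∀ j, (catalan (j + 1) : ℝ) * u ^ (j + 1) =
      u * ∑ i ∈ range (j + 1), g i * g (j - i) := by
    intro j
    rw [catalan_succ',
      Finset.Nat.sum_antidiagonal_eq_sum_range_succ (fun a b => catalan a * catalan b), mul_sum]
    push_cast
    rw [sum_mul]
    refine sum_congr rfl fun i hi => ?_
    rw [← Nat.add_sub_cancel' (Nat.lt_succ_iff.mp (mem_range.mp hi))]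
    simp only [g, Nat.add_sub_cancel_left]
    ring
  rw [sum_range_succ', sum_congr rfl fun j _ => hsucc j, ← mul_sum,
    sum_range_diag_flip n (fun a b => g a * g b), sq, sum_mul_sum]
  simp only [catalan_zero, pow_zero, Nat.cast_one, mul_one]
  rw [add_comm]
  gcongr with i hi
  omega

theorem sum_range_catalan_mul_pow_le (hu : 0 ≤ u) (hc : 1 + u * c ^ 2 ≤ c) (n : ℕ) :
    ∑ j ∈ range n, (catalan j : ℝ) * u ^ j ≤ c := by
  induction n with
  | zero => simp only [range_zero, sum_empty]; nlinarith [sq_nonneg c]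
  | succ n ih =>
    have hnonneg : 0 ≤ ∑ j ∈ range n, (catalan j : ℝ) * u ^ j := by positivity
    calc _ ≤ 1 + u * (∑ j ∈ range n, (catalan j : ℝ) * u ^ j) ^ 2 :=
          sum_range_succ_catalan_mul_pow_le hu n
      _ ≤ 1 + u * c ^ 2 := by gcongr
      _ ≤ c := hc

theorem summable_catalan_mul_pow (hu : 0 ≤ u) (hc : 1 + u * c ^ 2 ≤ c) :
    Summable fun j => (catalan j : ℝ) * u ^ j :=
  summable_of_sum_range_le (fun j => by positivity) (sum_range_catalan_mul_pow_le hu hc)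

theorem tsum_catalan_mul_pow_eq_one_add_mul_sq
    (hsum : Summable fun j => (catalan j : ℝ) * u ^ j) :
    ∑' j, (catalan j : ℝ) * u ^ j = 1 + u * (∑' j, (catalan j : ℝ) * u ^ j) ^ 2 := by
  set g : ℕ → ℝ := fun j => catalan j * u ^ j
  have hnorm : Summable fun j => ‖g j‖ := hsum.abs
  have hsq : (∑' j, g j) ^ 2 = ∑' n, (catalan (n + 1) : ℝ) * u ^ n := by
    rw [sq, tsum_mul_tsum_eq_tsum_sum_antidiagonal_of_summable_norm hnorm hnorm]
    refine tsum_congr fun n => ?_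
    rw [catalan_succ', Nat.cast_sum, sum_mul]
    refine sum_congr rfl fun ij hij => ?_
    rw [← Finset.HasAntidiagonal.mem_antidiagonal.mp hij]
    simp only [g]
    push_cast
    ring
  conv_lhs => rw [hsum.tsum_eq_zero_add]
  rw [hsq, ← tsum_mul_left]
  simp only [g, catalan_zero, Nat.cast_one, pow_zero, mul_one, pow_succ]
  congr 1
  exact tsum_congr fun n => by ring

/-- `2 u c ≤ 1` says that `c` is the smaller root of `1 + u c² = c`; the partial sums never
exceed it. -/
theorem tsum_catalan_mul_pow_eq (hu : 0 ≤ u) (hc : 1 + u * c ^ 2 = c) (hroot : 2 * u * c ≤ 1) :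
    ∑' j, (catalan j : ℝ) * u ^ j = c := by
  set L := ∑' j, (catalan j : ℝ) * u ^ j
  have hle : L ≤ c := Real.tsum_le_of_sum_range_le (fun j => by positivity)
    (sum_range_catalan_mul_pow_le hu hc.le)
  have hquad : L = 1 + u * L ^ 2 :=
    tsum_catalan_mul_pow_eq_one_add_mul_sq (summable_catalan_mul_pow hu hc.le)
  have hroots : (c - L) * (1 - u * (c + L)) = 0 := by linear_combination -hc - hquad
  rcases mul_eq_zero.mp hroots with h | h
  · linarith
  · nlinarith [mul_nonneg hu (sub_nonneg.2 hle)]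

theorem tsum_catalan_mul_pow_add_le (hu : 0 ≤ u)
    (hsum : Summable fun j => (catalan j : ℝ) * u ^ j) (k : ℕ) :
    ∑' j, (catalan (j + k) : ℝ) * u ^ (j + k) ≤ (4 * u) ^ k * ∑' j, (catalan j : ℝ) * u ^ j := by
  rw [← tsum_mul_left]
  refine ((summable_nat_add_iff k).mpr hsum).tsum_le_tsum (fun j => ?_) (hsum.mul_left _)
  have hcat : (catalan (j + k) : ℝ) ≤ 4 ^ k * catalan j := by
    exact_mod_cast catalan_add_le_four_pow_mul j k
  calc (catalan (j + k) : ℝ) * u ^ (j + k) ≤ 4 ^ k * catalan j * u ^ (j + k) := by gcongr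
    _ = (4 * u) ^ k * (catalan j * u ^ j) := by ring

theorem sub_sum_range_catalan_mul_pow_le (hu : 0 ≤ u) (hc : 1 + u * c ^ 2 = c)
    (hroot : 2 * u * c ≤ 1) (k : ℕ) :
    c - ∑ j ∈ range k, (catalan j : ℝ) * u ^ j ≤ (4 * u) ^ k * c := by
  have hsum := summable_catalan_mul_pow hu hc.le
  have hsplit := hsum.sum_add_tsum_nat_add k
  have htail := tsum_catalan_mul_pow_add_le hu hsum k
  rw [tsum_catalan_mul_pow_eq hu hc hroot] at hsplit htail
  linarith

end CatalanSeries

theorem one_sub_sum_catalan_le {x : ℝ} (hx₀ : 0 ≤ x) (hx₁ : x ≤ 1) (k : ℕ) :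
    1 - ∑ j ∈ range k, (catalan j : ℝ) * x ^ j / (1 + x) ^ (2 * j + 1) ≤
      (4 * x) ^ k / (1 + x) ^ (2 * k) := by
  have hy : 0 < 1 + x := by linarith
  have hterm : ∀ j, (catalan j : ℝ) * x ^ j / (1 + x) ^ (2 * j + 1) =
      catalan j * (x / (1 + x) ^ 2) ^ j / (1 + x) := fun j => by
    rw [div_pow, ← pow_mul]
    field_simp
    ring
  have hbound := sub_sum_range_catalan_mul_pow_le (u := x / (1 + x) ^ 2) (c := 1 + x)
    (by positivity) (by field_simp) (by field_simp; linarith) k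
  calc 1 - ∑ j ∈ range k, (catalan j : ℝ) * x ^ j / (1 + x) ^ (2 * j + 1)
      = (1 + x - ∑ j ∈ range k, (catalan j : ℝ) * (x / (1 + x) ^ 2) ^ j) / (1 + x) := by
        rw [sum_congr rfl fun j _ => hterm j, ← sum_div, sub_div, div_self hy.ne']
    _ ≤ (4 * (x / (1 + x) ^ 2)) ^ k * (1 + x) / (1 + x) := by gcongr
    _ = (4 * x) ^ k / (1 + x) ^ (2 * k) := by
        rw [mul_div_cancel_right₀ _ hy.ne', mul_div_assoc', div_pow, ← pow_mul]

theorem sum_Icc_factorial_eq_sum_range_catalan (k : ℕ) (x : ℝ) :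
    ∑ j ∈ Icc 1 k, x ^ (j - 1) / (1 + x) ^ (2 * j - 1) *
        ((2 * j - 2).factorial / ((j.factorial : ℝ) * (j - 1).factorial)) =
      ∑ j ∈ range k, (catalan j : ℝ) * x ^ j / (1 + x) ^ (2 * j + 1) := by
  rw [sum_Icc_one_eq_sum_range]
  refine sum_congr rfl fun j _ => ?_
  rw [catalan_eq_factorial_div, show 2 * (j + 1) - 1 = 2 * j + 1 by omega,
    show 2 * (j + 1) - 2 = 2 * j by omega, Nat.add_sub_cancel]
  ring

theorem fkfun_closed_form_and_bound_general (k : ℕ) (x : ℝ) (hx : x ∈ Set.Icc (0 : ℝ) 1) :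
    fkfun k x =
      1 - ∑ j ∈ Finset.Icc 1 k, x ^ (j - 1) / (1 + x) ^ (2 * j - 1) *
        ((2 * j - 2).factorial / ((j.factorial : ℝ) * (j - 1).factorial)) ∧
    fkfun k x ≤ (4 * x) ^ k / (1 + x) ^ (2 * k - 1) := by
  obtain ⟨hx₀, hx₁⟩ := hx
  have hclosed := fkfun_eq_one_sub_sum_catalan k (x := x) (by linarith)
  refine ⟨hclosed.trans (by rw [sum_Icc_factorial_eq_sum_range_catalan]), ?_⟩
  calc fkfun k x ≤ (4 * x) ^ k / (1 + x) ^ (2 * k) := hclosed ▸ one_sub_sum_catalan_le hx₀ hx₁ k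
    _ ≤ (4 * x) ^ k / (1 + x) ^ (2 * k - 1) := by
        gcongr
        · linarith
        · omega

theorem fkfun_closed_form_and_bound (k : ℕ) (hk : 1 ≤ k) (x : ℝ) (hx : x ∈ Set.Icc (0 : ℝ) 1) :
    fkfun k x =
      1 - ∑ j ∈ Finset.Icc 1 k, x ^ (j - 1) / (1 + x) ^ (2 * j - 1) *
        ((2 * j - 2).factorial / ((j.factorial : ℝ) * (j - 1).factorial)) ∧
    fkfun k x ≤ (4 * x) ^ k / (1 + x) ^ (2 * k - 1) :=
  fkfun_closed_form_and_bound_general k x hx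

end
end
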